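/- Let n, α, β be real numbers and let a be a twice differentiable real-valued function on (−1,1). Then for every τ ∈ (−1,1), D_{(n,α,β)}( ((1−τ)/2)^{−α} ((1+τ)/2)^{−β} a(τ) ) = ((1−τ)/2)^{−α} ((1+τ)/2)^{−β} · (D_{(n+α+β,−α,−β)} a)(τ), where on the left-hand side the operator D_{(n,α,β)} is applied to the function τ ↦ ((1−τ)/2)^{−α} ((1+τ)/2)^{−β} a(τ). -/

import Mathlib

/-- The Jacobi differential operator
`(D_{(n,α,β)} a)(τ) = (1−τ²)a''(τ) + (β − α − (α+β+2)τ)a'(τ) + n(n+α+β+1)a(τ)`. -/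
noncomputable def jacobiD (n α β : ℝ) (a : ℝ → ℝ) (τ : ℝ) : ℝ :=
  (1 - τ ^ 2) * deriv (deriv a) τ + (β - α - (α + β + 2) * τ) * deriv a τ
    + n * (n + α + β + 1) * a τ

/-!
Write `w(τ) = ((1−τ)/2)^{−α} ((1+τ)/2)^{−β}` and `g = w'/w = α/(1−τ) − β/(1+τ)`. Then
`(w a)' = w (g a + a')` and `(w a)'' = w ((g' + g²) a + 2 g a' + a'')`, so `D_{(n,α,β)}(w a) / w`
is again a second-order operator applied to `a`; collecting coefficients, using
`(1 − τ²) g = α(1+τ) − β(1−τ)`, identifies it with `D_{(n+α+β,−α,−β)} a`.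
-/

open Filter Topology

section LogarithmicDerivative

variable {w g a : ℝ → ℝ} {τ : ℝ}

theorem deriv_mul_eq_of_hasDerivAt_mul_self (hw : HasDerivAt w (w τ * g τ) τ)
    (ha : DifferentiableAt ℝ a τ) :
    deriv (fun t => w t * a t) τ = w τ * (g τ * a τ + deriv a τ) := by
  rw [(hw.fun_mul ha.hasDerivAt).deriv]
  ring

theorem deriv_deriv_mul_eq_of_hasDerivAt_mul_self {g' : ℝ}
    (hw : ∀ᶠ t in 𝓝 τ, HasDerivAt w (w t * g t) t) (hg : HasDerivAt g g' τ)
    (ha : ∀ᶠ t in 𝓝 τ, DifferentiableAt ℝ a t) (ha' : DifferentiableAt ℝ (deriv a) τ) :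
    deriv (deriv fun t => w t * a t) τ
      = w τ * ((g' + g τ ^ 2) * a τ + 2 * g τ * deriv a τ + deriv (deriv a) τ) := by
  have hderiv : deriv (fun t => w t * a t) =ᶠ[𝓝 τ] fun t => w t * (g t * a t + deriv a t) := by
    filter_upwards [hw, ha] with t hwt hat using deriv_mul_eq_of_hasDerivAt_mul_self hwt hat
  rw [hderiv.deriv_eq,
    (hw.self_of_nhds.fun_mul
      ((hg.fun_mul ha.self_of_nhds.hasDerivAt).fun_add ha'.hasDerivAt)).deriv]
  ring

end LogarithmicDerivative

section JacobiWeight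

noncomputable def jacobiWeight (p q t : ℝ) : ℝ := ((1 - t) / 2) ^ p * ((1 + t) / 2) ^ q

variable (p q : ℝ) {t : ℝ}

theorem hasDerivAt_jacobiWeight (ht : t ∈ Set.Ioo (-1 : ℝ) 1) :
    HasDerivAt (jacobiWeight p q) (jacobiWeight p q t * (q / (1 + t) - p / (1 - t))) t := by
  have hl : 0 < 1 - t := by linarith [ht.2]
  have hr : 0 < 1 + t := by linarith [ht.1]
  have hl' : HasDerivAt (fun t : ℝ => (1 - t) / 2) (-1 / 2) t := by
    simpa using ((hasDerivAt_id t).const_sub 1).div_const 2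
  have hr' : HasDerivAt (fun t : ℝ => (1 + t) / 2) (1 / 2) t := by
    simpa using ((hasDerivAt_id t).const_add 1).div_const 2
  refine ((hl'.rpow_const (p := p) (Or.inl (by positivity))).mul
    (hr'.rpow_const (p := q) (Or.inl (by positivity)))).congr_deriv ?_
  rw [Real.rpow_sub_one (by positivity), Real.rpow_sub_one (by positivity), jacobiWeight]
  field_simp
  ring

theorem hasDerivAt_div_one_add_sub_div_one_sub (hl : 1 - t ≠ 0) (hr : 1 + t ≠ 0) :
    HasDerivAt (fun t => q / (1 + t) - p / (1 - t)) (-(q / (1 + t) ^ 2) - p / (1 - t) ^ 2) t := by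
  have hl' : HasDerivAt (fun t : ℝ => 1 - t) (-1) t := by
    simpa using (hasDerivAt_id t).const_sub 1
  have hr' : HasDerivAt (fun t : ℝ => 1 + t) 1 t := by
    simpa using (hasDerivAt_id t).const_add 1
  refine (((hasDerivAt_const t q).div hr' hr).fun_sub
    ((hasDerivAt_const t p).div hl' hl)).congr_deriv ?_
  field_simp
  ring

end JacobiWeight

/-- Symmetry of the Jacobi operator:
`D_{(n,α,β)}(((1−τ)/2)^{−α} ((1+τ)/2)^{−β} a(τ))
  = ((1−τ)/2)^{−α} ((1+τ)/2)^{−β} (D_{(n+α+β,−α,−β)} a)(τ)` on `(−1,1)`. -/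
theorem stmt5 (n α β : ℝ) (a : ℝ → ℝ)
    (ha : ∀ τ ∈ Set.Ioo (-1 : ℝ) 1, DifferentiableAt ℝ a τ)
    (ha' : ∀ τ ∈ Set.Ioo (-1 : ℝ) 1, DifferentiableAt ℝ (deriv a) τ) :
    ∀ τ ∈ Set.Ioo (-1 : ℝ) 1,
      jacobiD n α β (fun t => ((1 - t) / 2) ^ (-α) * ((1 + t) / 2) ^ (-β) * a t) τ
        = ((1 - τ) / 2) ^ (-α) * ((1 + τ) / 2) ^ (-β) * jacobiD (n + α + β) (-α) (-β) a τ := by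
  intro τ hτ
  have hl : 1 - τ ≠ 0 := by linarith [hτ.2]
  have hr : 1 + τ ≠ 0 := by linarith [hτ.1]
  have hnhds : Set.Ioo (-1 : ℝ) 1 ∈ 𝓝 τ := isOpen_Ioo.mem_nhds hτ
  set g : ℝ → ℝ := fun t => -β / (1 + t) - -α / (1 - t)
  have hw : ∀ᶠ t in 𝓝 τ, HasDerivAt (jacobiWeight (-α) (-β)) (jacobiWeight (-α) (-β) t * g t) t :=
    eventually_of_mem hnhds fun t ht => hasDerivAt_jacobiWeight _ _ ht
  change jacobiD n α β (fun t => jacobiWeight (-α) (-β) t * a t) τ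
    = jacobiWeight (-α) (-β) τ * jacobiD (n + α + β) (-α) (-β) a τ
  rw [jacobiD, jacobiD, deriv_mul_eq_of_hasDerivAt_mul_self hw.self_of_nhds (ha τ hτ),
    deriv_deriv_mul_eq_of_hasDerivAt_mul_self hw
      (hasDerivAt_div_one_add_sub_div_one_sub _ _ hl hr) (eventually_of_mem hnhds ha) (ha' τ hτ)]
  simp only [g]
  field_simp
  ring
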